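/- Let K_ℓ = K^{ℓ·⌊√(log ℓ)⌋} (K ≥ 10 large) and ε_ℓ = 1/ℓ, and for R ∈ ℕ define t, T by K_{t−1} < √R ≤ K_t and K_{T−1} < R ≤ K_T. Then for every γ > 1 and all sufficiently large R, the product ∏_{ℓ=t+1}^{T−1} ε_ℓ is strictly less than K_T^{−γ}. -/

import Mathlib

/-!
Write `K_ℓ = K ^ E(ℓ)` with `E(ℓ) = ℓ·a(ℓ)` and `a(ℓ) = ⌊√(log ℓ)⌋`. Since `a` is nondecreasing and
grows by at most one when `ℓ` is multiplied by `e`, the conditions `K_{T-1} < K_t²` and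
`K_{t-1}² < K_T` force `T ≤ 2t` and `8(t - 1) < 5T`. Hence the product has at least `T/4`
factors, each at least `t + 1 ≥ √T`, so it exceeds `exp (T log T / 8)`, while
`K_T^γ ≤ exp (γ log K · T √(log T))`; the former wins once `√(log T) > 8γ log K`.
-/

/-- The sequence K_ℓ = K^{ℓ·⌊√(log ℓ)⌋}. -/
noncomputable def Kseq (K ℓ : ℕ) : ℕ :=
  K ^ (ℓ * Nat.floor (Real.sqrt (Real.log ℓ)))

open Real

noncomputable def floorSqrtLog (ℓ : ℕ) : ℕ := ⌊√(log ℓ)⌋₊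

noncomputable def Kexp (ℓ : ℕ) : ℕ := ℓ * floorSqrtLog ℓ

lemma Kseq_eq (K ℓ : ℕ) : Kseq K ℓ = K ^ Kexp ℓ := rfl

lemma floorSqrtLog_mono : Monotone floorSqrtLog := by
  intro m n h
  rcases Nat.eq_zero_or_pos m with rfl | hm
  · simp [floorSqrtLog]
  · exact Nat.floor_le_floor
      (sqrt_le_sqrt (log_le_log (by exact_mod_cast hm) (by exact_mod_cast h)))

lemma floorSqrtLog_le_sqrt_log (n : ℕ) : (floorSqrtLog n : ℝ) ≤ √(log n) :=
  Nat.floor_le (sqrt_nonneg _)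

lemma le_floorSqrtLog {k n : ℕ} (h : exp ((k : ℝ) ^ 2) ≤ n) : k ≤ floorSqrtLog n := by
  have hn : (0 : ℝ) < n := (exp_pos _).trans_le h
  exact Nat.le_floor
    ((le_sqrt (by positivity) (log_natCast_nonneg n)).2 ((le_log_iff_exp_le hn).2 h))

lemma floorSqrtLog_le_succ {m n : ℕ} (hm : 0 < m) (h : (n : ℝ) ≤ exp 1 * m) :
    floorSqrtLog n ≤ floorSqrtLog m + 1 := by
  rcases Nat.eq_zero_or_pos n with rfl | hn
  · simp [floorSqrtLog]
  have hlog : log n ≤ log m + 1 := by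
    have := log_le_log (by exact_mod_cast hn) h
    rwa [log_mul (exp_pos 1).ne' (by positivity), log_exp, add_comm] at this
  have hlogm : 0 ≤ log m := log_natCast_nonneg m
  have hsqrt : √(log n) ≤ √(log m) + 1 := by
    refine (sqrt_le_sqrt hlog).trans ((sqrt_le_left (by positivity)).2 ?_)
    nlinarith [sq_sqrt hlogm, sqrt_nonneg (log m)]
  calc floorSqrtLog n ≤ ⌊√(log m) + 1⌋₊ := Nat.floor_le_floor hsqrt
    _ = floorSqrtLog m + 1 := Nat.floor_add_one (sqrt_nonneg _)

lemma Kexp_mono : Monotone Kexp := fun _ _ h => Nat.mul_le_mul h (floorSqrtLog_mono h)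

lemma Kseq_mono {K : ℕ} (hK : 1 ≤ K) : Monotone (Kseq K) :=
  fun _ _ h => Nat.pow_le_pow_right hK (Kexp_mono h)

lemma Kseq_sq_lt_iff {K : ℕ} (hK : 1 < K) (m n : ℕ) :
    Kseq K m ^ 2 < Kseq K n ↔ 2 * Kexp m < Kexp n := by
  rw [Kseq_eq, Kseq_eq, ← pow_mul, mul_comm]
  exact Nat.pow_lt_pow_iff_right hK

lemma Kseq_lt_sq_iff {K : ℕ} (hK : 1 < K) (m n : ℕ) :
    Kseq K m < Kseq K n ^ 2 ↔ Kexp m < 2 * Kexp n := by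
  rw [Kseq_eq, Kseq_eq, ← pow_mul, mul_comm (Kexp n)]
  exact Nat.pow_lt_pow_iff_right hK

lemma lt_two_mul_of_Kexp_lt_two_mul {m n : ℕ} (h : Kexp n < 2 * Kexp m) : n < 2 * m := by
  by_contra! hmn
  have ha : floorSqrtLog m ≤ floorSqrtLog n := floorSqrtLog_mono (by omega)
  have : 2 * Kexp m ≤ Kexp n :=
    calc 2 * (m * floorSqrtLog m) ≤ 2 * m * floorSqrtLog n := by
          rw [← mul_assoc]; exact Nat.mul_le_mul_left _ ha
      _ ≤ n * floorSqrtLog n := Nat.mul_le_mul_right _ hmn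
  omega

lemma eight_mul_lt_five_mul_of_two_mul_Kexp_lt {m n : ℕ} (hm : exp 16 ≤ m)
    (h : 2 * Kexp m < Kexp n) : 8 * m < 5 * n := by
  by_contra! hmn
  have hm0 : 0 < m := by
    have : (0 : ℝ) < m := (exp_pos _).trans_le hm
    exact_mod_cast this
  have h4 : 4 ≤ floorSqrtLog m := le_floorSqrtLog (by norm_num [hm])
  have hsucc : floorSqrtLog n ≤ floorSqrtLog m + 1 := by
    refine floorSqrtLog_le_succ hm0 ?_
    have hn : (n : ℝ) ≤ 2 * m := by exact_mod_cast (by omega : n ≤ 2 * m)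
    nlinarith [add_one_le_exp 1, (Nat.cast_nonneg m : (0 : ℝ) ≤ m)]
  unfold Kexp at h
  nlinarith [Nat.mul_le_mul_left n hsucc, Nat.mul_le_mul_right (floorSqrtLog m + 1) hmn]

lemma Kexp_mul_lt {c : ℝ} {n : ℕ} (hc : 0 ≤ c) (h : 8 * c < √(log n)) :
    Kexp n * c < n * log n / 8 := by
  have hn : (0 : ℝ) < n := by
    rcases Nat.eq_zero_or_pos n with rfl | hn
    · simp at h; linarith
    · exact_mod_cast hn
  have hs : 0 < √(log n) := by linarith
  calc (Kexp n : ℝ) * c = n * (floorSqrtLog n * c) := by push_cast [Kexp]; ring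
    _ ≤ n * (√(log n) * c) := by gcongr; exact floorSqrtLog_le_sqrt_log n
    _ < n * (√(log n) * (√(log n) / 8)) := by gcongr; linarith
    _ = n * log n / 8 := by rw [← mul_div_assoc, mul_self_sqrt (by positivity)]; ring

lemma mul_log_div_eight_le {T s k : ℕ} (hT0 : 0 < T) (hs : 2 ≤ s) (hTs : T ≤ 2 * s)
    (hTk : T ≤ 4 * k) : T * log T / 8 ≤ k * log s := by
  have hsq : (T : ℝ) ≤ (s : ℝ) ^ 2 := by exact_mod_cast (by nlinarith : T ≤ s ^ 2)
  have hlog : log T ≤ 2 * log s := by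
    have := log_le_log (by exact_mod_cast hT0) hsq
    rwa [log_pow, Nat.cast_ofNat] at this
  have hk : (T : ℝ) / 4 ≤ k := by
    rw [div_le_iff₀ (by norm_num)]; exact_mod_cast (by omega : T ≤ k * 4)
  calc (T : ℝ) * log T / 8 = (T / 4) * (log T / 2) := by ring
    _ ≤ k * log s :=
      mul_le_mul hk (by linarith) (div_nonneg (log_natCast_nonneg T) (by norm_num)) k.cast_nonneg

lemma prod_Icc_one_div_lt_Kseq_rpow_neg {K t T : ℕ} {γ : ℝ} (hK : 1 ≤ K) (hγ : 0 ≤ γ)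
    (h8 : 8 * (γ * log K) < √(log T)) (hTt : T ≤ 2 * t) (hcount : T ≤ 4 * (T - (t + 1))) :
    ∏ ℓ ∈ Finset.Icc (t + 1) (T - 1), (1 / (ℓ : ℝ)) < (Kseq K T : ℝ) ^ (-γ) := by
  have hlogK : 0 ≤ log K := log_nonneg (by exact_mod_cast hK)
  have hKT : (0 : ℝ) < Kseq K T := by unfold Kseq; positivity
  have hT0 : 0 < T := by
    rcases Nat.eq_zero_or_pos T with rfl | hT
    · simp at h8; nlinarith [mul_nonneg hγ hlogK]
    · exact hT
  have hcard : (Finset.Icc (t + 1) (T - 1)).card = T - (t + 1) := by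
    rw [Nat.card_Icc]; omega
  have hprod : ((t + 1 : ℕ) : ℝ) ^ (T - (t + 1)) ≤ ∏ ℓ ∈ Finset.Icc (t + 1) (T - 1), (ℓ : ℝ) := by
    rw [← hcard, ← Finset.prod_const]
    exact Finset.prod_le_prod (fun _ _ => by positivity)
      fun ℓ hℓ => by exact_mod_cast (Finset.mem_Icc.1 hℓ).1
  have hexp : (Kexp T : ℝ) * (γ * log K) < (T - (t + 1) : ℕ) * log (t + 1 : ℕ) :=
    (Kexp_mul_lt (mul_nonneg hγ hlogK) h8).trans_le
      (mul_log_div_eight_le hT0 (by omega) (by omega) hcount)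
  have hlt : (Kseq K T : ℝ) ^ γ < ∏ ℓ ∈ Finset.Icc (t + 1) (T - 1), (ℓ : ℝ) :=
    calc (Kseq K T : ℝ) ^ γ = exp (Kexp T * (γ * log K)) := by
          rw [rpow_def_of_pos hKT, Kseq_eq, Nat.cast_pow, log_pow]; ring_nf
      _ < exp ((T - (t + 1) : ℕ) * log (t + 1 : ℕ)) := exp_lt_exp.2 hexp
      _ = ((t + 1 : ℕ) : ℝ) ^ (T - (t + 1)) := by
          rw [← log_pow, exp_log (by positivity)]
      _ ≤ _ := hprod
  rw [rpow_neg hKT.le, Finset.prod_div_distrib, Finset.prod_const_one, one_div]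
  exact inv_strictAnti₀ (rpow_pos_of_pos hKT γ) hlt

theorem admissibility_of_special_parameters :
    ∃ K₀ : ℕ, 10 ≤ K₀ ∧ ∀ K : ℕ, K₀ ≤ K →
      ∀ γ : ℝ, 1 < γ → ∃ R₀ : ℕ, ∀ R : ℕ, R₀ ≤ R →
        ∀ t T : ℕ, 1 ≤ t → 1 ≤ T →
          (Kseq K (t - 1) : ℝ) < Real.sqrt R → Real.sqrt R ≤ (Kseq K t : ℝ) →
          (Kseq K (T - 1) : ℝ) < (R : ℝ) → (R : ℝ) ≤ (Kseq K T : ℝ) →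
          (∏ ℓ ∈ Finset.Icc (t + 1) (T - 1), (1 / (ℓ : ℝ))) <
            (Kseq K T : ℝ) ^ (-γ) := by
  refine ⟨10, le_rfl, fun K hK γ hγ => ?_⟩
  have hK1 : 1 < K := by omega
  set c := γ * log K
  have hc : 0 ≤ c := mul_nonneg (by linarith) (log_nonneg (by exact_mod_cast hK1.le))
  set M := ⌈exp 16 + exp ((8 * c) ^ 2)⌉₊ + 1
  have hbig : ∀ n, M ≤ n → exp 16 + exp ((8 * c) ^ 2) ≤ ((n - 1 : ℕ) : ℝ) := fun n hn =>
    (Nat.le_ceil _).trans (by exact_mod_cast (by omega : ⌈exp 16 + exp ((8 * c) ^ 2)⌉₊ ≤ n - 1))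
  refine ⟨Kseq K M ^ 2 + 1, fun R hR t T _ _ h1 h2 h3 h4 => ?_⟩
  have hA : Kseq K (t - 1) ^ 2 < R := by exact_mod_cast (lt_sqrt (by positivity)).1 h1
  have hB : R ≤ Kseq K t ^ 2 := by exact_mod_cast (sqrt_le_left (by positivity)).1 h2
  have hC : Kseq K (T - 1) < R := by exact_mod_cast h3
  have hD : R ≤ Kseq K T := by exact_mod_cast h4
  have htM : M ≤ t := by
    by_contra! htM
    have := Nat.pow_le_pow_left (Kseq_mono hK1.le htM.le) 2
    omega
  have hTM : M ≤ T := by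
    by_contra! hTM
    have := Kseq_mono hK1.le hTM.le
    have := Nat.le_self_pow two_ne_zero (Kseq K M)
    omega
  have hlow : 8 * (t - 1) < 5 * T := eight_mul_lt_five_mul_of_two_mul_Kexp_lt
    (by linarith [hbig t htM, exp_pos ((8 * c) ^ 2)]) ((Kseq_sq_lt_iff hK1 _ _).1 (hA.trans_le hD))
  have hupp : T - 1 < 2 * t :=
    lt_two_mul_of_Kexp_lt_two_mul ((Kseq_lt_sq_iff hK1 _ _).1 (hC.trans_le hB))
  have hT16 : 16 < T := by
    have : (16 : ℝ) < ((T - 1 : ℕ) : ℝ) := by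
      linarith [hbig T hTM, add_one_le_exp 16, exp_pos ((8 * c) ^ 2)]
    have : 16 < T - 1 := by exact_mod_cast this
    omega
  have h8 : 8 * c < √(log T) := by
    have : exp ((8 * c) ^ 2) < T := by
      have := Nat.cast_le (α := ℝ).2 (Nat.sub_le T 1)
      linarith [hbig T hTM, exp_pos 16]
    exact (lt_sqrt (by positivity)).2 ((lt_log_iff_exp_lt (by positivity)).2 this)
  exact prod_Icc_one_div_lt_Kseq_rpow_neg hK1.le (by linarith) h8 (by omega) (by omega)
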